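/- Let G be a cubic graph with M1, M2 disjoint matchings such that |M1 ∪ M2| is maximum and, subject to this, the associated conflict graph H has the minimum number of edges. If a component of G − M1 − M2 is a path u1u2u3u4 (P4), then no edge of M1 ∪ M2 joins an endpoint of this P4 to the middle vertex of a P3 component of G − M1 − M2. -/

import Mathlib

open SimpleGraph

/-- A matching in `G` given as a set of edges: edges of `G`, pairwise vertex-disjoint. -/
def IsMatchingSet {V : Type*} (G : SimpleGraph V) (M : Set (Sym2 V)) : Prop :=
  M ⊆ G.edgeSet ∧ ∀ e ∈ M, ∀ f ∈ M, e ≠ f → ∀ v, v ∈ e → v ∉ f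

/-- `M1, M2` are disjoint matchings of `G` with `|M1 ∪ M2|` maximum over all pairs of
disjoint matchings of `G`. -/
def MaxDisjointPair {V : Type*} (G : SimpleGraph V) (M1 M2 : Set (Sym2 V)) : Prop :=
  IsMatchingSet G M1 ∧ IsMatchingSet G M2 ∧ Disjoint M1 M2 ∧
  ∀ N1 N2 : Set (Sym2 V), IsMatchingSet G N1 → IsMatchingSet G N2 → Disjoint N1 N2 →
    (N1 ∪ N2).ncard ≤ (M1 ∪ M2).ncard

/-- Adjacency in `Ĝ = G − M1 − M2`: adjacency via an edge of `G` not in `M1 ∪ M2`. -/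
def hatAdj {V : Type*} (G : SimpleGraph V) (M1 M2 : Set (Sym2 V)) (x y : V) : Prop :=
  G.Adj x y ∧ s(x, y) ∉ M1 ∪ M2

/-- The vertices `u1 u2 u3 u4` form a path (`P4`) connected component of
`Ĝ = G − M1 − M2`. -/
def IsP4Component {V : Type*} (G : SimpleGraph V) (M1 M2 : Set (Sym2 V))
    (u1 u2 u3 u4 : V) : Prop :=
  u1 ≠ u2 ∧ u1 ≠ u3 ∧ u1 ≠ u4 ∧ u2 ≠ u3 ∧ u2 ≠ u4 ∧ u3 ≠ u4 ∧
  hatAdj G M1 M2 u1 u2 ∧ hatAdj G M1 M2 u2 u3 ∧ hatAdj G M1 M2 u3 u4 ∧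
  (∀ w, hatAdj G M1 M2 u1 w → w = u2) ∧
  (∀ w, hatAdj G M1 M2 u2 w → w = u1 ∨ w = u3) ∧
  (∀ w, hatAdj G M1 M2 u3 w → w = u2 ∨ w = u4) ∧
  (∀ w, hatAdj G M1 M2 u4 w → w = u3)

/-- The vertices `v1, v, v2` form a `P3` connected component of `Ĝ = G − M1 − M2`,
with middle vertex `v`. -/
def IsP3Component {V : Type*} (G : SimpleGraph V) (M1 M2 : Set (Sym2 V))
    (v1 v v2 : V) : Prop :=
  v1 ≠ v2 ∧ v1 ≠ v ∧ v2 ≠ v ∧ hatAdj G M1 M2 v v1 ∧ hatAdj G M1 M2 v v2 ∧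
  (∀ w, hatAdj G M1 M2 v w → w = v1 ∨ w = v2) ∧
  (∀ w, hatAdj G M1 M2 v1 w → w = v) ∧ (∀ w, hatAdj G M1 M2 v2 w → w = v)

/-- The edge set of the conflict graph `H` associated with the pair of disjoint
matchings `(N1, N2)`: unordered pairs of distinct edges of `G − N1 − N2` whose
distance in the line graph of `G` is at most `2`. -/
def conflictEdges {V : Type*} (G : SimpleGraph V) (N1 N2 : Set (Sym2 V)) :
    Set (Sym2 (Sym2 V)) :=
  {q | ∃ e f : Sym2 V, q = s(e, f) ∧ e ≠ f ∧ e ∈ G.edgeSet \ (N1 ∪ N2) ∧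
    f ∈ G.edgeSet \ (N1 ∪ N2) ∧ ∃ x y : V, x ∈ e ∧ y ∈ f ∧ (x = y ∨ G.Adj x y)}

/-!
Suppose `s(u1, v) ∈ M1` (the other cases are symmetric). Each of `u2`, `u3`, `v` lies on exactly
one edge of `M1 ∪ M2`, and `u1` on `s(u1, v)` and on some `s(u1, z) ∈ M2`.

If `u2` is missed by `M1`, maximality puts the edge at `u3` into `M1`, and we exchange `s(u1, v)`
for `s(u1, u2)` in `M1`. For `z = u4`, exchanging also `s(u1, u4)` for `s(u3, u4)` in `M2` makes
room for `s(u1, v)` in `M2`, against maximality. Otherwise every free edge close to `s(u1, v)` is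
close to `s(u1, u2)`, as the free edges at `v1`, `v2` pass through `v`; but `s(u3, u4)` is close
only to the latter, so the conflict graph loses an edge, against minimality.

If `u2` is covered by `M1`, swap `M1` and `M2` on the component of `u2` in the graph `M1 ∪ M2`,
which has maximum degree two. This reduces to the first case unless the component contains `v`.
Then `u2` and `v` are its ends, so `u3` lies in another component, and swapping there lets
`s(u2, u3)` join a matching.
-/

section

variable {V : Type*} {G : SimpleGraph V} {M N M1 M2 N1 N2 : Set (Sym2 V)}

namespace IsMatchingSet

lemma adj (hM : IsMatchingSet G M) {x y : V} (h : s(x, y) ∈ M) : G.Adj x y := hM.1 h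

lemma eq_of_mem (hM : IsMatchingSet G M) {x y : V} {q : Sym2 V} (h : s(x, y) ∈ M) (hq : q ∈ M)
    (hx : x ∈ q) : q = s(x, y) := by
  by_contra hne
  exact hM.2 q hq _ h hne x hx (Sym2.mem_mk_left x y)

lemma eq_of_mk_mem (hM : IsMatchingSet G M) {x y y' : V} (h : s(x, y) ∈ M) (h' : s(x, y') ∈ M) :
    y' = y :=
  Sym2.congr_right.mp (hM.eq_of_mem h h' (Sym2.mem_mk_left x y'))

lemma mono (hM : IsMatchingSet G M) (h : N ⊆ M) : IsMatchingSet G N :=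
  ⟨h.trans hM.1, fun e he f hf => hM.2 e (h he) f (h hf)⟩

lemma union (hM : IsMatchingSet G M) (hN : IsMatchingSet G N)
    (hMN : ∀ e ∈ M, ∀ f ∈ N, ∀ z ∈ e, z ∉ f) : IsMatchingSet G (M ∪ N) := by
  refine ⟨Set.union_subset hM.1 hN.1, ?_⟩
  rintro e (he | he) f (hf | hf) hef z hze
  · exact hM.2 e he f hf hef z hze
  · exact hMN e he f hf z hze
  · exact fun hzf => hMN f hf e he z hzf hze
  · exact hN.2 e he f hf hef z hze

lemma insert (hM : IsMatchingSet G M) {x y : V} (hxy : G.Adj x y) (hx : ∀ q ∈ M, x ∉ q)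
    (hy : ∀ q ∈ M, y ∉ q) : IsMatchingSet G (insert s(x, y) M) := by
  have hxy' : IsMatchingSet G {s(x, y)} := ⟨by simpa using hxy, by simp_all⟩
  refine hxy'.union hM ?_
  rintro e rfl f hf z hz
  rcases Sym2.mem_iff.mp hz with rfl | rfl
  exacts [hx f hf, hy f hf]

end IsMatchingSet

lemma hatAdj.symm {x y : V} (h : hatAdj G M1 M2 x y) : hatAdj G M1 M2 y x :=
  ⟨h.1.symm, Sym2.eq_swap ▸ h.2⟩

lemma hatAdj_congr (h : N1 ∪ N2 = M1 ∪ M2) : hatAdj G N1 N2 = hatAdj G M1 M2 := by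
  ext x y
  simp only [hatAdj, h]

lemma IsP4Component.of_union_eq (h : N1 ∪ N2 = M1 ∪ M2) {u1 u2 u3 u4 : V}
    (hP : IsP4Component G M1 M2 u1 u2 u3 u4) : IsP4Component G N1 N2 u1 u2 u3 u4 := by
  rwa [IsP4Component, hatAdj_congr h]

lemma IsP3Component.of_union_eq (h : N1 ∪ N2 = M1 ∪ M2) {v1 v v2 : V}
    (hP : IsP3Component G M1 M2 v1 v v2) : IsP3Component G N1 N2 v1 v v2 := by
  rwa [IsP3Component, hatAdj_congr h]

lemma IsP4Component.reverse {u1 u2 u3 u4 : V} (h : IsP4Component G M1 M2 u1 u2 u3 u4) :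
    IsP4Component G M1 M2 u4 u3 u2 u1 := by
  obtain ⟨d12, d13, d14, d23, d24, d34, a12, a23, a34, c1, c2, c3, c4⟩ := h
  exact ⟨d34.symm, d24.symm, d14.symm, d23.symm, d13.symm, d12.symm, a34.symm, a23.symm,
    a12.symm, c4, fun w hw => (c3 w hw).symm, fun w hw => (c2 w hw).symm, c1⟩

lemma IsP3Component.mem_of_hatAdj {v1 v v2 x y : V} (h : IsP3Component G M1 M2 v1 v v2)
    (hx : x ∈ ({v1, v, v2} : Set V)) (hxy : hatAdj G M1 M2 x y) : y ∈ ({v1, v, v2} : Set V) := by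
  obtain ⟨-, -, -, -, -, cv, cv1, cv2⟩ := h
  rcases hx with rfl | rfl | rfl
  · simp [cv1 y hxy]
  · rcases cv y hxy with rfl | rfl <;> simp
  · simp [cv2 y hxy]

lemma IsP4Component.ne_of_isP3Component {u1 u2 u3 u4 v1 v v2 : V}
    (hP4 : IsP4Component G M1 M2 u1 u2 u3 u4) (hP3 : IsP3Component G M1 M2 v1 v v2) :
    ∀ x ∈ ({u1, u2, u3, u4} : Set V), ∀ y ∈ ({v1, v, v2} : Set V), x ≠ y := by
  classical
  obtain ⟨d12, d13, d14, d23, d24, d34, a12, a23, a34, -⟩ := hP4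
  have hstep : ∀ {a b : V}, hatAdj G M1 M2 a b →
      (a ∈ ({v1, v, v2} : Set V) ↔ b ∈ ({v1, v, v2} : Set V)) := fun hab =>
    ⟨fun ha => hP3.mem_of_hatAdj ha hab, fun hb => hP3.mem_of_hatAdj hb hab.symm⟩
  rintro x hx _ hy rfl
  have hall : ({u1, u2, u3, u4} : Finset V) ⊆ {v1, v, v2} := by
    have h1 : u1 ∈ ({v1, v, v2} : Set V) := by
      rcases hx with rfl | rfl | rfl | rfl
      exacts [hy, (hstep a12).2 hy, (hstep a12).2 ((hstep a23).2 hy),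
        (hstep a12).2 ((hstep a23).2 ((hstep a34).2 hy))]
    have h2 := (hstep a12).1 h1
    have h3 := (hstep a23).1 h2
    have h4 := (hstep a34).1 h3
    intro y hy
    simp only [Finset.mem_insert, Finset.mem_singleton] at hy ⊢
    rcases hy with rfl | rfl | rfl | rfl <;> assumption
  have hcard : ({u1, u2, u3, u4} : Finset V).card = 4 := by
    simp [*]
  have := (Finset.card_le_card hall).trans Finset.card_le_three
  omega

namespace MaxDisjointPair

lemma of_ncard_eq (h : MaxDisjointPair G M1 M2) (hN1 : IsMatchingSet G N1)
    (hN2 : IsMatchingSet G N2) (hN : Disjoint N1 N2) (hU : (N1 ∪ N2).ncard = (M1 ∪ M2).ncard) :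
    MaxDisjointPair G N1 N2 :=
  ⟨hN1, hN2, hN, fun P1 P2 hP1 hP2 hP => hU ▸ h.2.2.2 P1 P2 hP1 hP2 hP⟩

lemma ncard_union_eq (h : MaxDisjointPair G M1 M2) (h' : MaxDisjointPair G N1 N2) :
    (N1 ∪ N2).ncard = (M1 ∪ M2).ncard :=
  le_antisymm (h.2.2.2 N1 N2 h'.1 h'.2.1 h'.2.2.1) (h'.2.2.2 M1 M2 h.1 h.2.1 h.2.2.1)

lemma symm (h : MaxDisjointPair G M1 M2) : MaxDisjointPair G M2 M1 :=
  h.of_ncard_eq h.2.1 h.1 h.2.2.1.symm (by rw [Set.union_comm])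

lemma exists_mem_left [Finite V] (h : MaxDisjointPair G M1 M2) {x y : V}
    (hxy : hatAdj G M1 M2 x y) : (∃ q ∈ M1, x ∈ q) ∨ (∃ q ∈ M1, y ∈ q) := by
  obtain ⟨h1, h2, hd, hmax⟩ := h
  by_contra! hfree
  have hM1' := h1.insert hxy.1 hfree.1 hfree.2
  have hd' : Disjoint (insert s(x, y) M1) M2 :=
    Set.disjoint_insert_left.mpr ⟨fun hq => hxy.2 (Or.inr hq), hd⟩
  have := hmax _ _ hM1' h2 hd'
  rw [Set.insert_union, Set.ncard_insert_of_notMem hxy.2] at this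
  omega

lemma exists_mem_right [Finite V] (h : MaxDisjointPair G M1 M2) {x y : V}
    (hxy : hatAdj G M1 M2 x y) : (∃ q ∈ M2, x ∈ q) ∨ (∃ q ∈ M2, y ∈ q) :=
  h.symm.exists_mem_left (hatAdj_congr (Set.union_comm M2 M1) ▸ hxy)

lemma mem_left_iff_mem_right [Finite V] (h : MaxDisjointPair G M1 M2) {x y : V}
    (hxy : hatAdj G M1 M2 x y) {ex ey : Sym2 V} (hx : ∀ q ∈ M1 ∪ M2, x ∈ q → q = ex)
    (hy : ∀ q ∈ M1 ∪ M2, y ∈ q → q = ey) (hex : ex ∈ M1 ∪ M2) (hey : ey ∈ M1 ∪ M2) :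
    ex ∈ M1 ↔ ey ∈ M2 := by
  have hd := h.2.2.1
  constructor
  · intro hex1
    refine hey.resolve_left fun hey1 => ?_
    rcases h.exists_mem_right hxy with ⟨q, hq, hxq⟩ | ⟨q, hq, hyq⟩
    · exact hd.notMem_of_mem_left (hx q (Or.inr hq) hxq ▸ hex1) hq
    · exact hd.notMem_of_mem_left (hy q (Or.inr hq) hyq ▸ hey1) hq
  · intro hey2
    refine hex.resolve_right fun hex2 => ?_
    rcases h.exists_mem_left hxy with ⟨q, hq, hxq⟩ | ⟨q, hq, hyq⟩
    · exact hd.notMem_of_mem_left hq (hx q (Or.inl hq) hxq ▸ hex2)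
    · exact hd.notMem_of_mem_left hq (hy q (Or.inl hq) hyq ▸ hey2)

lemma exchange_left (h : MaxDisjointPair G M1 M2) {e : Sym2 V} {x y : V} (he : e ∈ M1)
    (hxy : hatAdj G M1 M2 x y) (hx : ∀ q ∈ M1, x ∈ q → q = e) (hy : ∀ q ∈ M1, y ∈ q → q = e) :
    MaxDisjointPair G (insert s(x, y) (M1 \ {e})) M2 ∧
      insert s(x, y) (M1 \ {e}) ∪ M2 = insert s(x, y) ((M1 ∪ M2) \ {e}) := by
  have hd := h.2.2.1
  have hU : insert s(x, y) (M1 \ {e}) ∪ M2 = insert s(x, y) ((M1 ∪ M2) \ {e}) := by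
    rw [Set.insert_union, Set.union_sdiff_distrib,
      Set.sdiff_singleton_eq_self (hd.notMem_of_mem_left he)]
  refine ⟨h.of_ncard_eq ?_ h.2.1 ?_ ?_, hU⟩
  · exact (h.1.mono Set.sdiff_subset).insert hxy.1 (fun q hq hxq => hq.2 (hx q hq.1 hxq))
      (fun q hq hyq => hq.2 (hy q hq.1 hyq))
  · exact Set.disjoint_insert_left.mpr ⟨fun hq => hxy.2 (Or.inr hq), hd.mono_left Set.sdiff_subset⟩
  · rw [hU, Set.ncard_exchange hxy.2 (Or.inl he)]

end MaxDisjointPair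

lemma exists_swap_on (h1 : IsMatchingSet G M1) (h2 : IsMatchingSet G M2) (hd : Disjoint M1 M2)
    (S : Set V) (hS : ∀ x y, s(x, y) ∈ M1 ∪ M2 → x ∈ S → y ∈ S) :
    ∃ N1 N2, IsMatchingSet G N1 ∧ IsMatchingSet G N2 ∧ Disjoint N1 N2 ∧ N1 ∪ N2 = M1 ∪ M2 ∧
      (∀ x y, s(x, y) ∈ M1 → (s(x, y) ∈ N1 ↔ x ∉ S)) ∧
      (∀ x y, s(x, y) ∈ M2 → (s(x, y) ∈ N1 ↔ x ∈ S)) := by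
  set T : Set (Sym2 V) := {q | ∃ z ∈ q, z ∈ S}
  have hT : ∀ q ∈ M1 ∪ M2, ∀ z ∈ q, (q ∈ T ↔ z ∈ S) := by
    intro q hq z hz
    induction q using Sym2.ind with | _ a b => ?_
    have hab : a ∈ S ↔ b ∈ S := ⟨hS a b hq, hS b a (Sym2.eq_swap ▸ hq)⟩
    rcases Sym2.mem_iff.mp hz with rfl | rfl <;> simp [T, hab]
  have hsep : ∀ e ∈ M1 ∪ M2, ∀ f ∈ M1 ∪ M2, e ∉ T → f ∈ T → ∀ z ∈ e, z ∉ f :=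
    fun e he f hf heT hfT z hze hzf => heT ((hT e he z hze).2 ((hT f hf z hzf).1 hfT))
  refine ⟨M1 \ T ∪ M2 ∩ T, M2 \ T ∪ M1 ∩ T, ?_, ?_, ?_, ?_, ?_, ?_⟩
  · exact (h1.mono Set.sdiff_subset).union (h2.mono Set.inter_subset_left)
      fun e he f hf => hsep e (Or.inl he.1) f (Or.inr hf.1) he.2 hf.2
  · exact (h2.mono Set.sdiff_subset).union (h1.mono Set.inter_subset_left)
      fun e he f hf => hsep e (Or.inr he.1) f (Or.inl hf.1) he.2 hf.2
  · rw [Set.disjoint_left]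
    rintro q (⟨hq, hqT⟩ | ⟨hq, hqT⟩) (⟨hq', hqT'⟩ | ⟨hq', hqT'⟩)
    exacts [hd.notMem_of_mem_left hq hq', hqT hqT', hqT' hqT, hd.notMem_of_mem_left hq' hq]
  · ext q
    by_cases hq : q ∈ T <;> simp [hq, or_comm]
  · intro x y hxy
    simp [hT _ (Or.inl hxy) x (Sym2.mem_mk_left x y), hd.notMem_of_mem_left hxy, hxy]
  · intro x y hxy
    simp [hT _ (Or.inr hxy) x (Sym2.mem_mk_left x y), hd.notMem_of_mem_right hxy, hxy]

def IsOptimalPair (G : SimpleGraph V) (M1 M2 : Set (Sym2 V)) : Prop :=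
  MaxDisjointPair G M1 M2 ∧ ∀ N1 N2 : Set (Sym2 V), IsMatchingSet G N1 → IsMatchingSet G N2 →
    Disjoint N1 N2 → (N1 ∪ N2).ncard = (M1 ∪ M2).ncard →
    (conflictEdges G M1 M2).ncard ≤ (conflictEdges G N1 N2).ncard

lemma IsOptimalPair.of_union_eq (h : IsOptimalPair G M1 M2) (hN1 : IsMatchingSet G N1)
    (hN2 : IsMatchingSet G N2) (hN : Disjoint N1 N2) (hU : N1 ∪ N2 = M1 ∪ M2) :
    IsOptimalPair G N1 N2 := by
  refine ⟨h.1.of_ncard_eq hN1 hN2 hN (by rw [hU]), fun P1 P2 hP1 hP2 hP hsz => ?_⟩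
  rw [show conflictEdges G N1 N2 = conflictEdges G M1 M2 by simp only [conflictEdges, hU]]
  exact h.2 P1 P2 hP1 hP2 hP (hU ▸ hsz)

lemma IsOptimalPair.symm (h : IsOptimalPair G M1 M2) : IsOptimalPair G M2 M1 :=
  h.of_union_eq h.1.2.1 h.1.1 h.1.2.2.1.symm (Set.union_comm M2 M1)

def EdgesNear (G : SimpleGraph V) (e f : Sym2 V) : Prop :=
  ∃ x y : V, x ∈ e ∧ y ∈ f ∧ (x = y ∨ G.Adj x y)

lemma EdgesNear.symm {e f : Sym2 V} (h : EdgesNear G e f) : EdgesNear G f e := by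
  obtain ⟨x, y, hx, hy, hxy⟩ := h
  exact ⟨y, x, hy, hx, hxy.imp Eq.symm Adj.symm⟩

/-- The transposition `e ↔ f` maps the new conflict graph injectively into the old one minus
`s(f, g)`. -/
lemma ncard_conflictEdges_lt [Finite V] {e f g : Sym2 V}
    (hN : N1 ∪ N2 = insert f ((M1 ∪ M2) \ {e})) (hf : f ∈ G.edgeSet \ (M1 ∪ M2))
    (hg : g ∈ G.edgeSet \ (M1 ∪ M2)) (hfg : f ≠ g) (hfg' : EdgesNear G f g)
    (heg : ¬ EdgesNear G e g)
    (hnear : ∀ b ∈ G.edgeSet \ (M1 ∪ M2), EdgesNear G e b → EdgesNear G f b) :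
    (conflictEdges G N1 N2).ncard < (conflictEdges G M1 M2).ncard := by
  classical
  set σ := Equiv.swap e f
  have hfN : f ∉ G.edgeSet \ (N1 ∪ N2) := fun h => h.2 (hN ▸ Set.mem_insert f _)
  have hfree : ∀ a ∈ G.edgeSet \ (N1 ∪ N2), a ≠ e → a ∈ G.edgeSet \ (M1 ∪ M2) ∧ σ a = a := by
    intro a ha hae
    refine ⟨⟨ha.1, fun haU => ha.2 (hN ▸ Or.inr ⟨haU, hae⟩)⟩, ?_⟩
    exact Equiv.swap_apply_of_ne_of_ne hae (ne_of_mem_of_not_mem ha hfN)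
  have hmaps : ∀ a ∈ G.edgeSet \ (N1 ∪ N2), ∀ b ∈ G.edgeSet \ (N1 ∪ N2), a ≠ b →
      EdgesNear G a b → a ≠ e → s(σ a, σ b) ∈ conflictEdges G M1 M2 \ {s(f, g)} := by
    intro a ha b hb hab hnab hae
    obtain ⟨haM, hσa⟩ := hfree a ha hae
    have haf : a ≠ f := ne_of_mem_of_not_mem ha hfN
    have hbf : b ≠ f := ne_of_mem_of_not_mem hb hfN
    rw [hσa]
    by_cases hbe : b = e
    · subst hbe
      rw [show σ b = f from Equiv.swap_apply_left b f]
      refine ⟨⟨a, f, rfl, haf, haM, hf, (hnear a haM hnab.symm).symm⟩, fun hag => ?_⟩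
      rcases Sym2.eq_iff.mp hag with ⟨h, -⟩ | ⟨rfl, -⟩
      exacts [haf h, heg hnab.symm]
    · obtain ⟨hbM, hσb⟩ := hfree b hb hbe
      rw [hσb]
      refine ⟨⟨a, b, rfl, hab, haM, hbM, hnab⟩, fun habg => ?_⟩
      rcases Sym2.eq_iff.mp habg with ⟨h, -⟩ | ⟨-, h⟩
      exacts [haf h, hbf h]
  have hsub : Sym2.map σ '' conflictEdges G N1 N2 ⊆ conflictEdges G M1 M2 \ {s(f, g)} := by
    rintro _ ⟨_, ⟨a, b, rfl, hab, ha, hb, hnab⟩, rfl⟩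
    rw [Sym2.map_mk]
    by_cases hae : a = e
    · rw [Sym2.eq_swap (a := σ a)]
      exact hmaps b hb a ha hab.symm (EdgesNear.symm hnab) (hae ▸ hab.symm)
    · exact hmaps a ha b hb hab hnab hae
  calc (conflictEdges G N1 N2).ncard
      = (Sym2.map σ '' conflictEdges G N1 N2).ncard :=
        (Set.ncard_image_of_injective _ (Sym2.map.injective σ.injective)).symm
    _ ≤ (conflictEdges G M1 M2 \ {s(f, g)}).ncard := Set.ncard_le_ncard hsub
    _ < (conflictEdges G M1 M2).ncard :=
        Set.ncard_sdiff_singleton_lt_of_mem ⟨f, g, rfl, hfg, hf, hg, hfg'⟩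

namespace SimpleGraph

lemma exists_third_adj [Fintype V] [DecidableRel G.Adj] {x a b : V} (hx : G.degree x = 3)
    (ha : G.Adj x a) (hb : G.Adj x b) (hab : a ≠ b) :
    ∃ c, c ≠ a ∧ c ≠ b ∧ G.Adj x c ∧ ∀ y, G.Adj x y → y = a ∨ y = b ∨ y = c := by
  classical
  have hmem : ∀ y, y ∈ ((G.neighborFinset x).erase a).erase b ↔ y ≠ b ∧ y ≠ a ∧ G.Adj x y := by
    simp
  have hcard : (((G.neighborFinset x).erase a).erase b).card = 1 := by
    rw [Finset.card_erase_of_mem (by simpa [hab.symm] using hb),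
      Finset.card_erase_of_mem (by simpa using ha), card_neighborFinset_eq_degree, hx]
  obtain ⟨c, hc⟩ := Finset.card_eq_one.mp hcard
  obtain ⟨hcb, hca, hxc⟩ := (hmem c).1 (hc ▸ Finset.mem_singleton_self c)
  refine ⟨c, hca, hcb, hxc, fun y hy => ?_⟩
  by_cases hya : y = a
  · exact Or.inl hya
  by_cases hyb : y = b
  · exact Or.inr (Or.inl hyb)
  have hy' := (hmem y).2 ⟨hyb, hya, hy⟩
  rw [hc, Finset.mem_singleton] at hy'
  exact Or.inr (Or.inr hy')

lemma degree_fromEdgeSet_le_one {U : Set (Sym2 V)} {x : V} {e : Sym2 V}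
    [Fintype ((fromEdgeSet U).neighborSet x)] (hx : ∀ q ∈ U, x ∈ q → q = e) :
    (fromEdgeSet U).degree x ≤ 1 := by
  rw [← card_neighborFinset_eq_degree, Finset.card_le_one]
  intro a ha b hb
  simp only [mem_neighborFinset, fromEdgeSet_adj] at ha hb
  exact Sym2.congr_right.mp ((hx _ ha.1 (Sym2.mem_mk_left x a)).trans
    (hx _ hb.1 (Sym2.mem_mk_left x b)).symm)

lemma degree_fromEdgeSet_union_le_two (h1 : IsMatchingSet G M1) (h2 : IsMatchingSet G M2) (x : V)
    [Fintype ((fromEdgeSet (M1 ∪ M2)).neighborSet x)] : (fromEdgeSet (M1 ∪ M2)).degree x ≤ 2 := by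
  classical
  have hle : ∀ {M}, IsMatchingSet G M → ∀ t : Finset V, (∀ y ∈ t, s(x, y) ∈ M) → t.card ≤ 1 :=
    fun hM t ht => Finset.card_le_one.mpr fun a ha b hb => hM.eq_of_mk_mem (ht b hb) (ht a ha)
  set t := (fromEdgeSet (M1 ∪ M2)).neighborFinset x
  have hM1 := hle h1 (t.filter fun y => s(x, y) ∈ M1) fun y hy => (Finset.mem_filter.mp hy).2
  have hM2 := hle h2 (t.filter fun y => s(x, y) ∉ M1) fun y hy => by
    simp only [t, Finset.mem_filter, mem_neighborFinset, fromEdgeSet_adj] at hy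
    exact hy.1.1.resolve_left hy.2
  calc (fromEdgeSet (M1 ∪ M2)).degree x = t.card := (card_neighborFinset_eq_degree _ _).symm
    _ = (t.filter fun y => s(x, y) ∈ M1).card + (t.filter fun y => s(x, y) ∉ M1).card :=
      (Finset.card_filter_add_card_filter_not _).symm
    _ ≤ 1 + 1 := add_le_add hM1 hM2

/-- Three vertices of degree at most one would leave their component with fewer edges than a
spanning tree. -/
theorem Reachable.eq_or_eq_or_eq_of_degree_le_one {H : SimpleGraph V} [Fintype V]
    [DecidableRel H.Adj] (hdeg : ∀ x, H.degree x ≤ 2) {a b c : V} (hab : H.Reachable a b)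
    (hac : H.Reachable a c) (ha : H.degree a ≤ 1) (hb : H.degree b ≤ 1) (hc : H.degree c ≤ 1) :
    a = b ∨ a = c ∨ b = c := by
  classical
  by_contra! hne
  let C := H.connectedComponentMk a
  have hmem : ∀ {y}, H.Reachable a y → y ∈ C.supp := fun h =>
    (ConnectedComponent.mem_supp_iff _ _).mpr (ConnectedComponent.sound h).symm
  have hdegC : ∀ y : C.supp, (H.induce C.supp).degree y = H.degree y := fun y =>
    degree_induce_of_neighborSet_subset fun z hz => C.mem_supp_of_adj_mem_supp y.2 hz
  let T : Finset C.supp := {⟨a, hmem .rfl⟩, ⟨b, hmem hab⟩, ⟨c, hmem hac⟩}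
  have hT : T.card = 3 := Finset.card_eq_three.mpr ⟨_, _, _, by simp [hne.1], by simp [hne.2.1],
    by simp [hne.2.2], rfl⟩
  have hbound : ∀ y : C.supp, (H.induce C.supp).degree y + (if y ∈ T then 1 else 0) ≤ 2 := by
    intro y
    rw [hdegC]
    split_ifs with hy
    · simp only [T, Finset.mem_insert, Finset.mem_singleton] at hy
      rcases hy with rfl | rfl | rfl <;> dsimp only <;> omega
    · exact hdeg y
  have hsum := Finset.sum_le_sum fun y (_ : y ∈ Finset.univ) => hbound y
  rw [Finset.sum_add_distrib, sum_degrees_eq_twice_card_edges, Finset.sum_boole,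
    Finset.filter_mem_eq_inter, Finset.univ_inter, hT, Finset.sum_const, smul_eq_mul] at hsum
  have hconn : (H.induce C.supp).Connected := C.connected_toSimpleGraph
  have htree := hconn.card_vert_le_card_edgeSet_add_one
  rw [Nat.card_eq_fintype_card, Nat.card_eq_fintype_card, ← edgeFinset_card] at htree
  simp only [Finset.card_univ] at hsum
  omega

end SimpleGraph

lemma IsP3Component.eq_center_of_hatAdj {v1 v v2 x y : V} (hP3 : IsP3Component G M1 M2 v1 v v2)
    (hx : x = v1 ∨ x = v2) (hxy : hatAdj G M1 M2 x y) : y = v := by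
  rcases hx with rfl | rfl
  exacts [hP3.2.2.2.2.2.2.1 y hxy, hP3.2.2.2.2.2.2.2 y hxy]

lemma EdgesNear.of_isP3Component {v1 v v2 u w : V} {b : Sym2 V}
    (hP3 : IsP3Component G M1 M2 v1 v v2) (huv : G.Adj u v)
    (hv : ∀ y, G.Adj v y → y = u ∨ y = v1 ∨ y = v2) (hb : b ∈ G.edgeSet \ (M1 ∪ M2))
    (h : EdgesNear G s(u, v) b) : EdgesNear G s(u, w) b := by
  obtain ⟨x, y, hx, hy, hxy⟩ := h
  rcases Sym2.mem_iff.mp hx with rfl | rfl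
  · exact ⟨x, y, Sym2.mem_mk_left x w, hy, hxy⟩
  rcases hxy with rfl | hxy
  · exact ⟨u, x, Sym2.mem_mk_left u w, hy, Or.inr huv⟩
  rcases hv y hxy with rfl | hy12
  · exact ⟨y, y, Sym2.mem_mk_left y w, hy, Or.inl rfl⟩
  obtain ⟨y', rfl⟩ := Sym2.mem_iff_exists.mp hy
  refine ⟨u, x, Sym2.mem_mk_left u w, ?_, Or.inr huv⟩
  exact hP3.eq_center_of_hatAdj hy12 ⟨hb.1, hb.2⟩ ▸ Sym2.mem_mk_right y y'

/-- Exchanging `s(u1, v)` for `s(u1, u2)` in `M1` and `s(u1, u4)` for `s(u3, u4)` in `M2` would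
make room for `s(u1, v)` in `M2`. -/
lemma MaxDisjointPair.mk_notMem_right_of_isP4Component [Finite V] (h : MaxDisjointPair G M1 M2)
    {u1 u2 u3 u4 v : V} (hP4 : IsP4Component G M1 M2 u1 u2 u3 u4) (he : s(u1, v) ∈ M1)
    (hu2 : ∀ q ∈ M1, u2 ∉ q) (hu3 : ∀ q ∈ M2, u3 ∉ q) (hv : ∀ q ∈ M2, v ∉ q) (hvu3 : v ≠ u3) :
    s(u1, u4) ∉ M2 := by
  intro hz
  have ⟨h1, h2, hd, _⟩ := h
  obtain ⟨-, d13, d14, d23, -, -, a12, -, a34, -⟩ := hP4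
  have hu2v : u2 ≠ v := by
    rintro rfl
    exact a12.2 (Or.inl he)
  have hvu4 : v ≠ u4 := fun hvu4 => hv _ hz (hvu4 ▸ Sym2.mem_mk_right u1 v)
  obtain ⟨h', hU'⟩ := h.exchange_left he a12 (fun q hq hu1q => h1.eq_of_mem he hq hu1q)
    fun q hq hu2q => absurd hu2q (hu2 q hq)
  have a34' : hatAdj G M2 (insert s(u1, u2) (M1 \ {s(u1, v)})) u3 u4 := by
    refine ⟨a34.1, ?_⟩
    rw [Set.union_comm, hU']
    rintro (h | ⟨h, -⟩)
    · rcases Sym2.eq_iff.mp h with ⟨h, -⟩ | ⟨h, -⟩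
      exacts [d13.symm h, d23.symm h]
    · exact a34.2 h
  obtain ⟨h'', hU''⟩ := h'.symm.exchange_left hz a34' (fun q hq hu3q => absurd hu3q (hu3 q hq))
    fun q hq hu4q => (h2.eq_of_mem (Sym2.eq_swap ▸ hz) hq hu4q).trans Sym2.eq_swap
  have a1v : hatAdj G (insert s(u3, u4) (M2 \ {s(u1, u4)}))
      (insert s(u1, u2) (M1 \ {s(u1, v)})) u1 v := by
    refine ⟨h1.adj he, ?_⟩
    rw [hU'']
    rintro (h | ⟨h | h | ⟨-, h⟩, -⟩)
    · rcases Sym2.eq_iff.mp h with ⟨h, -⟩ | ⟨h, -⟩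
      exacts [d13 h, d14 h]
    · exact hd.notMem_of_mem_left he h
    · exact hu2v (Sym2.congr_right.mp h).symm
    · exact h rfl
  rcases h''.exists_mem_left a1v with ⟨q, hq, hu1q⟩ | ⟨q, hq, hvq⟩
  · rcases hq with rfl | ⟨hq, hqz⟩
    · rcases Sym2.mem_iff.mp hu1q with h | h
      exacts [d13 h, d14 h]
    · exact hqz (h2.eq_of_mem hz hq hu1q)
  · rcases hq with rfl | ⟨hq, -⟩
    · rcases Sym2.mem_iff.mp hvq with h | h
      exacts [hvu3 h, hvu4 h]
    · exact hv q hq hvq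

/-- Otherwise exchanging `s(u1, v)` for `s(u1, u2)` in `M1` would lose the conflict between
`s(u1, u2)` and `s(u3, u4)` without creating new ones. -/
lemma IsOptimalPair.eq_or_eq_of_forall_adj [Finite V] (h : IsOptimalPair G M1 M2)
    {u1 u2 u3 u4 v1 v v2 z : V} (hP4 : IsP4Component G M1 M2 u1 u2 u3 u4)
    (hP3 : IsP3Component G M1 M2 v1 v v2) (he : s(u1, v) ∈ M1) (hu2 : ∀ q ∈ M1, u2 ∉ q)
    (hu1 : ∀ y, G.Adj u1 y → y = u2 ∨ y = v ∨ y = z)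
    (hv : ∀ y, G.Adj v y → y = u1 ∨ y = v1 ∨ y = v2) : z = u3 ∨ z = u4 := by
  by_contra! hz
  have hne := hP4.ne_of_isP3Component hP3
  obtain ⟨-, d13, d14, d23, d24, -, a12, a23, a34, -⟩ := hP4
  have hnbhd : ∀ x ∈ s(u1, v), ∀ y, (x = y ∨ G.Adj x y) →
      y ∈ ({u1, u2, v, z, v1, v2} : Set V) := by
    intro x hx y hxy
    rcases Sym2.mem_iff.mp hx with rfl | rfl <;> rcases hxy with rfl | hxy
    · simp
    · rcases hu1 y hxy with rfl | rfl | rfl <;> simp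
    · simp
    · rcases hv y hxy with rfl | rfl | rfl <;> simp
  have hfar : ∀ y ∈ s(u3, u4), y ∉ ({u1, u2, v, z, v1, v2} : Set V) := by
    intro y hy
    simp only [Set.mem_insert_iff, Set.mem_singleton_iff, not_or]
    rcases Sym2.mem_iff.mp hy with rfl | rfl
    · exact ⟨d13.symm, d23.symm, hne y (by simp) v (by simp), Ne.symm hz.1,
        hne y (by simp) v1 (by simp), hne y (by simp) v2 (by simp)⟩
    · exact ⟨d14.symm, d24.symm, hne y (by simp) v (by simp), Ne.symm hz.2,
        hne y (by simp) v1 (by simp), hne y (by simp) v2 (by simp)⟩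
  obtain ⟨h', hU'⟩ := h.1.exchange_left he a12 (fun q hq hu1q => h.1.1.eq_of_mem he hq hu1q)
    fun q hq hu2q => absurd hu2q (hu2 q hq)
  have hlt := ncard_conflictEdges_lt hU' ⟨a12.1, a12.2⟩ ⟨a34.1, a34.2⟩
    (fun h => (Sym2.eq_iff.mp h).elim (d13 ·.1) (d14 ·.1))
    ⟨u2, u3, Sym2.mem_mk_right u1 u2, Sym2.mem_mk_left u3 u4, Or.inr a23.1⟩
    (fun ⟨x, y, hx, hy, hxy⟩ => hfar y hy (hnbhd x hx y hxy))
    fun b hb => EdgesNear.of_isP3Component hP3 (h.1.1.adj he) hv hb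
  have hle := h.2 _ _ h'.1 h'.2.1 h'.2.2.1 (h.1.ncard_union_eq h')
  omega

lemma reachable_fromEdgeSet_of_mem {U : Set (Sym2 V)} (hU : U ⊆ G.edgeSet) {r x y : V}
    (hxy : s(x, y) ∈ U) (hx : (fromEdgeSet U).Reachable r x) : (fromEdgeSet U).Reachable r y :=
  hx.trans (Adj.reachable ((fromEdgeSet_adj _).mpr ⟨hxy, (hU hxy).ne⟩))

/-- Otherwise swapping `M1` and `M2` on the component of `y` would put the edges at `x` and `y`
into the same matching. -/
lemma MaxDisjointPair.reachable_of_hatAdj [Finite V] (h : MaxDisjointPair G M1 M2) {x y wx wy : V}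
    (hxy : hatAdj G M1 M2 x y) (hwx : s(x, wx) ∈ M1 ∪ M2) (hx : ∀ q ∈ M1 ∪ M2, x ∈ q → q = s(x, wx))
    (hwy : s(y, wy) ∈ M1 ∪ M2) (hy : ∀ q ∈ M1 ∪ M2, y ∈ q → q = s(y, wy)) :
    (fromEdgeSet (M1 ∪ M2)).Reachable x y := by
  by_contra hxy'
  have ⟨h1, h2, hd, _⟩ := h
  have hiff := h.mem_left_iff_mem_right hxy hx hy hwx hwy
  obtain ⟨N1, N2, hN1, hN2, hN, hNU, hc1, hc2⟩ := exists_swap_on h1 h2 hd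
    {z | (fromEdgeSet (M1 ∪ M2)).Reachable y z}
    fun a b hab ha => reachable_fromEdgeSet_of_mem (Set.union_subset h1.1 h2.1) hab ha
  have hiffN := (h.of_ncard_eq hN1 hN2 hN (by rw [hNU])).mem_left_iff_mem_right
    (hatAdj_congr hNU ▸ hxy) (hNU ▸ hx) (hNU ▸ hy) (hNU ▸ hwx) (hNU ▸ hwy)
  have hxS : x ∉ {z | (fromEdgeSet (M1 ∪ M2)).Reachable y z} := fun h => hxy' h.symm
  have hyS : y ∈ {z | (fromEdgeSet (M1 ∪ M2)).Reachable y z} := Reachable.rfl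
  rcases hwx with hwx | hwx
  · have hwy2 := hiff.mp hwx
    exact hN.notMem_of_mem_left ((hc2 y wy hwy2).mpr hyS) (hiffN.mp ((hc1 x wx hwx).mpr hxS))
  · have hwy1 : s(y, wy) ∈ M1 := hwy.resolve_right fun hwy2 =>
      hd.notMem_of_mem_left (hiff.mpr hwy2) hwx
    have hwyN : s(y, wy) ∈ N2 := (hNU ▸ hwy).resolve_left fun h => (hc1 y wy hwy1).mp h hyS
    exact hxS ((hc2 x wx hwx).mp (hiffN.mpr hwyN))

variable [Fintype V] [DecidableRel G.Adj]

lemma exists_unique_mem_of_hatAdj {x a b : V} (hx : G.degree x = 3) (hU : M1 ∪ M2 ⊆ G.edgeSet)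
    (ha : hatAdj G M1 M2 x a) (hb : hatAdj G M1 M2 x b) (hab : a ≠ b)
    (hnbr : ∀ y, hatAdj G M1 M2 x y → y = a ∨ y = b) :
    ∃ w, s(x, w) ∈ M1 ∪ M2 ∧ ∀ q ∈ M1 ∪ M2, x ∈ q → q = s(x, w) := by
  obtain ⟨w, hwa, hwb, hxw, hall⟩ := exists_third_adj hx ha.1 hb.1 hab
  have hwU : s(x, w) ∈ M1 ∪ M2 := by
    by_contra hfree
    rcases hnbr w ⟨hxw, hfree⟩ with h | h
    exacts [hwa h, hwb h]
  refine ⟨w, hwU, fun q hq hxq => ?_⟩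
  obtain ⟨y, rfl⟩ := Sym2.mem_iff_exists.mp hxq
  rcases hall y (hU hq) with rfl | rfl | rfl
  exacts [absurd hq ha.2, absurd hq hb.2, rfl]

lemma exists_mem_right_of_hatAdj_eq {x a b : V} (hx : G.degree x = 3) (h1 : IsMatchingSet G M1)
    (ha : hatAdj G M1 M2 x a) (hnbr : ∀ y, hatAdj G M1 M2 x y → y = a) (hb : s(x, b) ∈ M1) :
    ∃ z, s(x, z) ∈ M2 ∧ ∀ y, G.Adj x y → y = a ∨ y = b ∨ y = z := by
  have hab : a ≠ b := by
    rintro rfl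
    exact ha.2 (Or.inl hb)
  obtain ⟨z, hza, hzb, hxz, hall⟩ := exists_third_adj hx ha.1 (h1.adj hb) hab
  have hzU : s(x, z) ∈ M1 ∪ M2 := by
    by_contra hfree
    exact hza (hnbr z ⟨hxz, hfree⟩)
  exact ⟨z, hzU.resolve_left fun hzM1 => hzb (h1.eq_of_mk_mem hb hzM1), hall⟩

namespace IsP3Component

variable {v1 v v2 u : V}

lemma eq_of_center_mem (hv : G.degree v = 3) (hU : M1 ∪ M2 ⊆ G.edgeSet)
    (hP3 : IsP3Component G M1 M2 v1 v v2) (he : s(u, v) ∈ M1 ∪ M2) :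
    ∀ q ∈ M1 ∪ M2, v ∈ q → q = s(u, v) := by
  obtain ⟨dv12, -, -, av1, av2, cv, -⟩ := hP3
  obtain ⟨w, -, hvw⟩ := exists_unique_mem_of_hatAdj hv hU av1 av2 dv12 cv
  exact fun q hq hvq => (hvw q hq hvq).trans (hvw _ he (Sym2.mem_mk_right u v)).symm

lemma eq_or_eq_or_eq_of_adj_center (hv : G.degree v = 3) (hU : M1 ∪ M2 ⊆ G.edgeSet)
    (hP3 : IsP3Component G M1 M2 v1 v v2) (he : s(u, v) ∈ M1 ∪ M2) :
    ∀ y, G.Adj v y → y = u ∨ y = v1 ∨ y = v2 := by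
  intro y hvy
  by_cases hvyU : s(v, y) ∈ M1 ∪ M2
  · have := hP3.eq_of_center_mem hv hU he _ hvyU (Sym2.mem_mk_left v y)
    exact Or.inl (Sym2.congr_right.mp (this.trans Sym2.eq_swap))
  · exact Or.inr (hP3.2.2.2.2.2.1 y ⟨hvy, hvyU⟩)

end IsP3Component

lemma IsOptimalPair.mk_notMem_left_of_forall_notMem (hcubic : ∀ x, G.degree x = 3)
    (h : IsOptimalPair G M1 M2) {u1 u2 u3 u4 v1 v v2 : V}
    (hP4 : IsP4Component G M1 M2 u1 u2 u3 u4) (hP3 : IsP3Component G M1 M2 v1 v v2)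
    (hu2 : ∀ q ∈ M1, u2 ∉ q) : s(u1, v) ∉ M1 := by
  intro he
  have ⟨h1, h2, hd, _⟩ := h.1
  have hU : M1 ∪ M2 ⊆ G.edgeSet := Set.union_subset h1.1 h2.1
  have ⟨_, _, _, _, d24, _, a12, a23, a34, c1, _, c3, _⟩ := hP4
  have hv := hP3.eq_of_center_mem (hcubic v) hU (Or.inl he)
  have hvM2 : ∀ q ∈ M2, v ∉ q := fun q hq hvq =>
    hd.notMem_of_mem_left he (hv q (Or.inr hq) hvq ▸ hq)
  -- since `u2` is missed by `M1`, maximality puts the edge at `u3` into `M1`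
  obtain ⟨w3, -, hu3⟩ := exists_unique_mem_of_hatAdj (hcubic u3) hU a23.symm a34 d24 c3
  have hu3M2 : ∀ q ∈ M2, u3 ∉ q := by
    obtain ⟨q, hq, hu3q⟩ := (h.1.exists_mem_left a23).resolve_left fun ⟨q, hq, hu2q⟩ =>
      hu2 q hq hu2q
    intro q' hq' hu3q'
    exact hd.notMem_of_mem_left
      ((hu3 q (Or.inl hq) hu3q).trans (hu3 q' (Or.inr hq') hu3q').symm ▸ hq) hq'
  obtain ⟨z, hzM2, hu1⟩ := exists_mem_right_of_hatAdj_eq (hcubic u1) h1 a12 c1 he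
  rcases h.eq_or_eq_of_forall_adj hP4 hP3 he hu2 hu1
    (hP3.eq_or_eq_or_eq_of_adj_center (hcubic v) hU (Or.inl he)) with rfl | rfl
  · exact hu3M2 _ hzM2 (Sym2.mem_mk_right u1 z)
  · exact h.1.mk_notMem_right_of_isP4Component hP4 he hu2 hu3M2 hvM2
      (hP4.ne_of_isP3Component hP3 u3 (by simp) v (by simp)).symm hzM2

lemma IsOptimalPair.mk_notMem_left (hcubic : ∀ x, G.degree x = 3) (h : IsOptimalPair G M1 M2)
    {u1 u2 u3 u4 v1 v v2 : V} (hP4 : IsP4Component G M1 M2 u1 u2 u3 u4)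
    (hP3 : IsP3Component G M1 M2 v1 v v2) : s(u1, v) ∉ M1 := by
  classical
  intro he
  have ⟨h1, h2, hd, _⟩ := h.1
  have hU : M1 ∪ M2 ⊆ G.edgeSet := Set.union_subset h1.1 h2.1
  have hne := hP4.ne_of_isP3Component hP3
  have ⟨_, d13, _, d23, d24, _, a12, a23, a34, _, c2, c3, _⟩ := hP4
  obtain ⟨w2, hw2, hu2⟩ := exists_unique_mem_of_hatAdj (hcubic u2) hU a12.symm a23 d13 c2
  obtain ⟨w3, hw3, hu3⟩ := exists_unique_mem_of_hatAdj (hcubic u3) hU a23.symm a34 d24 c3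
  have hv := hP3.eq_of_center_mem (hcubic v) hU (Or.inl he)
  by_cases hu2v : (fromEdgeSet (M1 ∪ M2)).Reachable u2 v
  · -- `u2`, `v`, `u3` would be three ends of one alternating path
    rcases hu2v.eq_or_eq_or_eq_of_degree_le_one (fun x => degree_fromEdgeSet_union_le_two h1 h2 x)
      (h.1.reachable_of_hatAdj a23 hw2 hu2 hw3 hu3) (degree_fromEdgeSet_le_one hu2)
      (degree_fromEdgeSet_le_one hv) (degree_fromEdgeSet_le_one hu3) with h | h | h
    exacts [hne u2 (by simp) v (by simp) h, d23 h, hne u3 (by simp) v (by simp) h.symm]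
  rcases hw2 with hw2 | hw2
  · obtain ⟨N1, N2, hN1, hN2, hN, hNU, hc1, -⟩ := exists_swap_on h1 h2 hd
      {z | (fromEdgeSet (M1 ∪ M2)).Reachable u2 z} fun a b hab ha =>
        reachable_fromEdgeSet_of_mem hU hab ha
    refine (h.of_union_eq hN1 hN2 hN hNU).mk_notMem_left_of_forall_notMem hcubic
      (hP4.of_union_eq hNU) (hP3.of_union_eq hNU) (fun q hq hu2q => ?_)
      ((hc1 u1 v he).mpr fun hu1 => hu2v (reachable_fromEdgeSet_of_mem hU (Or.inl he) hu1))
    rw [hu2 q (hNU ▸ Or.inl hq) hu2q, hc1 u2 w2 hw2] at hq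
    exact hq .rfl
  · refine h.mk_notMem_left_of_forall_notMem hcubic hP4 hP3 (fun q hq hu2q => ?_) he
    exact hd.notMem_of_mem_left (hu2 q (Or.inl hq) hu2q ▸ hq) hw2

end

theorem stmt17 {V : Type*} [Fintype V] (G : SimpleGraph V) [DecidableRel G.Adj]
    (hcubic : ∀ v : V, G.degree v = 3) (M1 M2 : Set (Sym2 V))
    (hmax : MaxDisjointPair G M1 M2)
    -- subject to maximality, `H` has the minimum number of edges
    (hmin : ∀ N1 N2 : Set (Sym2 V), IsMatchingSet G N1 → IsMatchingSet G N2 →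
      Disjoint N1 N2 → (N1 ∪ N2).ncard = (M1 ∪ M2).ncard →
      (conflictEdges G M1 M2).ncard ≤ (conflictEdges G N1 N2).ncard)
    (u1 u2 u3 u4 : V) (hP4 : IsP4Component G M1 M2 u1 u2 u3 u4)
    (v1 v v2 : V) (hP3 : IsP3Component G M1 M2 v1 v v2) :
    s(u1, v) ∉ M1 ∪ M2 ∧ s(u4, v) ∉ M1 ∪ M2 := by
  have h : IsOptimalPair G M1 M2 := ⟨hmax, hmin⟩
  have hU : M2 ∪ M1 = M1 ∪ M2 := Set.union_comm M2 M1
  have hP4' := hP4.of_union_eq hU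
  have hP3' := hP3.of_union_eq hU
  refine ⟨?_, ?_⟩ <;> rintro (he | he)
  · exact h.mk_notMem_left hcubic hP4 hP3 he
  · exact h.symm.mk_notMem_left hcubic hP4' hP3' he
  · exact h.mk_notMem_left hcubic hP4.reverse hP3 he
  · exact h.symm.mk_notMem_left hcubic hP4'.reverse hP3' he
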